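/- Let d, n ≥ 1, let 1 ≤ a ≤ n with gcd(a,n) = 1, and assume dna ≥ 2. Set r = dn² and e = dna - 1 (so 1 ≤ e < r and gcd(e,r) = 1). Let r/e = [b_1,...,b_k] be the Hirzebruch–Jung continued fraction expansion, and let e' be the inverse of e modulo r with 1 ≤ e' < r. Then k + 2 + Σ_{i=1}^{k}(2 - b_i) - (e + e' + 2)/r = d - 1. -/

import Mathlib

/-- Evaluation of a Hirzebruch–Jung continued fraction `[b₁,…,b_k]` as
`b₁ - 1/(b₂ - 1/(⋯ - 1/b_k))`. -/
def hjEval : List ℚ → ℚ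
  | [] => 0
  | b :: rest => b - 1 / hjEval rest

/-- `b` is the Hirzebruch–Jung continued fraction expansion of `r/e`. -/
def IsHJExpansion (r e : ℕ) (b : List ℤ) : Prop :=
  b ≠ [] ∧ (∀ x ∈ b, 2 ≤ x) ∧ hjEval (b.map (fun x => (x : ℚ))) = (r : ℚ) / e

/-!
The Hirzebruch–Jung expansion of a rational number is unique: its first entry is the ceiling
of the value, because `1 / [b₂, …, b_k]` lies in `[0, 1)`. So it suffices to exhibit the
expansion of `dn² / (dna - 1)`. For `n = 1` it is `[2, …, 2]` with `d - 1` entries. For `n ≥ 2` it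
is the T-chain, built from `[4]` (`d = 1`) or `[3, 2, …, 2, 3]` (`d ≥ 2`) at `(n, a) = (2, 1)` by
the steps `[b₁, …, b_k] ↦ [b₁ + 1, …, b_k, 2]`, from `(n - a, a)` to `(n, a)`, and
`[b₁, …, b_k] ↦ [2, b₁, …, b_k + 1]`, from `(a, 2a - n)` to `(n, a)`. Each step multiplies the
continuant matrix, whose first column gives the value, by fixed matrices on both sides, and
both preserve `k + Σ (2 - bᵢ) = Σ (3 - bᵢ) = d - 2`.

For the correction term, `(e + 1)² = (dna)² ≡ 0 mod dn²` gives `e + e' + 2 ≡ e' (e + 1)² ≡ 0`,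
and the bound `e' < dn²` leaves only `e + e' + 2 = dn²` for `n ≥ 2` and `= 2dn²` for `n = 1`.
-/

section Uniqueness

variable {l : List ℤ}

theorem one_div_hjEval_mem_Ico (hl : ∀ x ∈ l, 2 ≤ x) :
    1 / hjEval (l.map (↑)) ∈ Set.Ico (0 : ℚ) 1 := by
  induction l with
  | nil => simp [hjEval]
  | cons b t ih =>
    obtain ⟨hb, ht⟩ := List.forall_mem_cons.1 hl
    have hb' : (2 : ℚ) ≤ b := by exact_mod_cast hb
    have hu := (ih ht).2
    have h : 1 < hjEval ((b :: t).map (↑)) := by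
      simp only [List.map_cons, hjEval]
      linarith
    exact ⟨by positivity, (div_lt_one (by linarith)).2 h⟩

theorem one_lt_hjEval_cons {b : ℤ} (hl : ∀ x ∈ b :: l, 2 ≤ x) :
    1 < hjEval ((b :: l).map (↑)) := by
  obtain ⟨hb, ht⟩ := List.forall_mem_cons.1 hl
  have hb' : (2 : ℚ) ≤ b := by exact_mod_cast hb
  have := (one_div_hjEval_mem_Ico ht).2
  simp only [List.map_cons, hjEval]
  linarith

theorem ceil_hjEval_cons {b : ℤ} (hl : ∀ x ∈ b :: l, 2 ≤ x) :
    ⌈hjEval ((b :: l).map (↑))⌉ = b := by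
  obtain ⟨h0, h1⟩ := one_div_hjEval_mem_Ico (List.forall_mem_cons.1 hl).2
  rw [Int.ceil_eq_iff]
  simp only [List.map_cons, hjEval]
  constructor <;> linarith

theorem hjEval_injOn :
    Set.InjOn (fun l : List ℤ => hjEval (l.map (↑))) {l | ∀ x ∈ l, 2 ≤ x} := by
  intro l hl l' hl' h
  induction l generalizing l' with
  | nil =>
    cases l' with
    | nil => rfl
    | cons c t' =>
      have := one_lt_hjEval_cons hl'
      simp only [List.map_nil, hjEval] at h
      linarith
  | cons b t ih =>
    cases l' with
    | nil =>
      have := one_lt_hjEval_cons hl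
      simp only [List.map_nil, hjEval] at h
      linarith
    | cons c t' =>
      obtain rfl : b = c := by
        rw [← ceil_hjEval_cons hl, ← ceil_hjEval_cons hl']
        exact congrArg Int.ceil h
      have ht : hjEval (t.map (↑)) = hjEval (t'.map (↑)) := by
        simpa only [List.map_cons, hjEval, sub_right_inj, one_div, inv_inj] using h
      rw [ih (List.forall_mem_cons.1 hl).2 (List.forall_mem_cons.1 hl').2 ht]

end Uniqueness

theorem IsHJExpansion.hjEval_eq {r e : ℕ} {b : List ℤ} (hb : IsHJExpansion r e b) :
    hjEval (b.map (↑)) = r / e := by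
  simpa only [bind_pure_comp, List.map_id', List.map_eq_map] using hb.2.2

def hjMatrix (l : List ℤ) : Matrix (Fin 2) (Fin 2) ℤ :=
  (l.map fun b => !![b, -1; 1, 0]).prod

@[simp] theorem hjMatrix_nil : hjMatrix [] = 1 := rfl

@[simp] theorem hjMatrix_cons (b : ℤ) (l : List ℤ) :
    hjMatrix (b :: l) = !![b, -1; 1, 0] * hjMatrix l := rfl

@[simp] theorem hjMatrix_append (l l' : List ℤ) :
    hjMatrix (l ++ l') = hjMatrix l * hjMatrix l' := by
  simp [hjMatrix]

theorem hjMatrix_cons_zero_zero (b : ℤ) (l : List ℤ) :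
    hjMatrix (b :: l) 0 0 = b * hjMatrix l 0 0 - hjMatrix l 1 0 := by
  simp [Matrix.mul_apply, Fin.sum_univ_two, sub_eq_add_neg]

theorem hjMatrix_cons_one_zero (b : ℤ) (l : List ℤ) :
    hjMatrix (b :: l) 1 0 = hjMatrix l 0 0 := by
  simp [Matrix.mul_apply, Fin.sum_univ_two]

theorem hjMatrix_col_zero_bounds {l : List ℤ} (hl : ∀ x ∈ l, 2 ≤ x) :
    0 ≤ hjMatrix l 1 0 ∧ hjMatrix l 1 0 < hjMatrix l 0 0 := by
  induction l with
  | nil => simp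
  | cons b t ih =>
    obtain ⟨hb, ht⟩ := List.forall_mem_cons.1 hl
    obtain ⟨h0, h1⟩ := ih ht
    rw [hjMatrix_cons_zero_zero, hjMatrix_cons_one_zero]
    constructor <;> nlinarith

theorem hjEval_eq_div {l : List ℤ} (hl : ∀ x ∈ l, 2 ≤ x) :
    hjEval (l.map (↑)) = (hjMatrix l 0 0 : ℚ) / hjMatrix l 1 0 := by
  induction l with
  | nil => simp [hjEval]
  | cons b t ih =>
    have ht := (List.forall_mem_cons.1 hl).2
    have hp : (hjMatrix t 0 0 : ℚ) ≠ 0 := by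
      have := hjMatrix_col_zero_bounds ht
      exact_mod_cast (by omega : hjMatrix t 0 0 ≠ 0)
    rw [List.map_cons, hjEval, ih ht, hjMatrix_cons_zero_zero, hjMatrix_cons_one_zero]
    push_cast
    field_simp

theorem hjMatrix_replicate_two (k : ℕ) :
    hjMatrix (List.replicate k 2) = !![(k : ℤ) + 1, -k; k, 1 - k] := by
  induction k with
  | zero => simp [Matrix.one_fin_two]
  | succ k ih =>
    rw [List.replicate_succ, hjMatrix_cons, ih, Matrix.mul_fin_two]
    push_cast
    ring_nf

theorem IsHJExpansion.eq_replicate_two {d : ℕ} (hd : 2 ≤ d) {b : List ℤ}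
    (hb : IsHJExpansion d (d - 1) b) : b = List.replicate (d - 1) 2 := by
  refine hjEval_injOn hb.2.1 (by simp) ?_
  dsimp only
  rw [hb.hjEval_eq, hjEval_eq_div (by simp), hjMatrix_replicate_two]
  simp [Nat.cast_sub (by omega : 1 ≤ d)]

theorem hjMatrix_succ_cons_append_two (x : ℤ) (t : List ℤ) :
    hjMatrix ((x + 1) :: (t ++ [2])) = !![1, 1; 0, 1] * hjMatrix (x :: t) * !![2, -1; 1, 0] := by
  have : !![x + 1, -1; 1, 0] = !![1, 1; 0, 1] * !![x, -1; 1, 0] := by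
    rw [Matrix.mul_fin_two]
    ring_nf
  simp only [hjMatrix_cons, hjMatrix_append, this, Matrix.mul_assoc]
  simp [hjMatrix]

theorem hjMatrix_two_cons_append_succ (m : List ℤ) (x : ℤ) :
    hjMatrix (2 :: (m ++ [x + 1])) = !![2, -1; 1, 0] * hjMatrix (m ++ [x]) * !![1, 0; -1, 1] := by
  have : !![x + 1, -1; 1, 0] = !![x, -1; 1, 0] * !![1, 0; -1, 1] := by
    rw [Matrix.mul_fin_two]
    ring_nf
  simp only [hjMatrix_cons, hjMatrix_append, this, Matrix.mul_assoc]
  simp [hjMatrix]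

theorem sum_three_sub_succ_cons_append_two (x : ℤ) (t : List ℤ) :
    (((x + 1) :: (t ++ [2])).map (3 - ·)).sum = ((x :: t).map (3 - ·)).sum := by
  simp only [List.map_cons, List.map_append, List.map_nil, List.sum_cons, List.sum_append,
    List.sum_nil]
  ring

theorem sum_three_sub_two_cons_append_succ (m : List ℤ) (x : ℤ) :
    ((2 :: (m ++ [x + 1])).map (3 - ·)).sum = ((m ++ [x]).map (3 - ·)).sum := by
  simp only [List.map_cons, List.map_append, List.map_nil, List.sum_cons, List.sum_append,
    List.sum_nil]
  ring

/-- The continuant matrix of the T-chain of `(d, n, a)`. -/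
def tMatrix (d n a : ℤ) : Matrix (Fin 2) (Fin 2) ℤ :=
  !![d * n ^ 2, 1 - d * n * (n - a); d * n * a - 1, 1 - d * a * (n - a)]

theorem tMatrix_add_eq_mul (d n a : ℤ) :
    tMatrix d (n + a) a = !![1, 1; 0, 1] * tMatrix d n a * !![2, -1; 1, 0] := by
  simp only [tMatrix, Matrix.mul_fin_two]
  ring_nf

theorem tMatrix_eq_mul_tMatrix_two_mul_sub (d n a : ℤ) :
    tMatrix d n a = !![2, -1; 1, 0] * tMatrix d a (2 * a - n) * !![1, 0; -1, 1] := by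
  simp only [tMatrix, Matrix.mul_fin_two]
  ring_nf

theorem exists_tChain_two {d : ℕ} (hd : 1 ≤ d) :
    ∃ l : List ℤ, l ≠ [] ∧ (∀ x ∈ l, 2 ≤ x) ∧ hjMatrix l = tMatrix d 2 1 ∧
      (l.map (3 - ·)).sum = (d : ℤ) - 2 := by
  obtain rfl | hd2 := hd.eq_or_lt
  · refine ⟨[4], by simp, by simp, ?_, by simp⟩
    simp [tMatrix]
  · obtain ⟨k, rfl⟩ : ∃ k, d = k + 2 := ⟨d - 2, by omega⟩
    refine ⟨3 :: (List.replicate k 2 ++ [3]), by simp, ?_, ?_, by simp⟩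
    · simp only [List.mem_cons, List.mem_append, List.mem_replicate]
      grind
    · simp only [hjMatrix_cons, hjMatrix_append, hjMatrix_replicate_two, hjMatrix_nil, tMatrix,
        Matrix.mul_one, Matrix.mul_fin_two]
      push_cast
      ring_nf

theorem exists_tChain {d : ℕ} (hd : 1 ≤ d) {n a : ℕ} (ha : 1 ≤ a) (han : a < n)
    (hcop : Nat.Coprime a n) :
    ∃ l : List ℤ, l ≠ [] ∧ (∀ x ∈ l, 2 ≤ x) ∧ hjMatrix l = tMatrix d n a ∧
      (l.map (3 - ·)).sum = (d : ℤ) - 2 := by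
  induction n using Nat.strong_induction_on generalizing a with
  | _ n ih =>
  obtain rfl | hn := (show n = 2 ∨ 2 < n by omega)
  · obtain rfl : a = 1 := by omega
    exact exists_tChain_two hd
  have h2a : 2 * a ≠ n := fun h => by
    have := Nat.Coprime.eq_one_of_dvd hcop ⟨2, by omega⟩
    omega
  obtain hlt | hgt := h2a.lt_or_gt
  · obtain ⟨l, hne, hl, hM, hsum⟩ :=
      ih (n - a) (by omega) ha (by omega) ((Nat.coprime_sub_self_right han.le).2 hcop)
    obtain ⟨x, t, rfl⟩ := List.exists_cons_of_ne_nil hne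
    refine ⟨(x + 1) :: (t ++ [2]), by simp, ?_, ?_, ?_⟩
    · have := hl x List.mem_cons_self
      simp only [List.mem_cons, List.mem_append] at hl ⊢
      grind
    · rw [hjMatrix_succ_cons_append_two, hM, ← tMatrix_add_eq_mul, Nat.cast_sub han.le,
        sub_add_cancel]
    · rw [sum_three_sub_succ_cons_append_two, hsum]
  · have hcop' : Nat.Coprime (2 * a - n) a := by
      rw [show 2 * a - n = a - (n - a) by omega, Nat.coprime_self_sub_left (by omega),
        Nat.coprime_sub_self_left han.le]
      exact hcop.symm
    obtain ⟨l, hne, hl, hM, hsum⟩ := ih a han (a := 2 * a - n) (by omega) (by omega) hcop'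
    obtain ⟨m, x, rfl⟩ := (List.eq_nil_or_concat' l).resolve_left hne
    refine ⟨2 :: (m ++ [x + 1]), by simp, ?_, ?_, ?_⟩
    · have := hl x (by simp)
      simp only [List.mem_cons, List.mem_append] at hl ⊢
      grind
    · rw [hjMatrix_two_cons_append_succ, hM, Nat.cast_sub hgt.le, Nat.cast_mul, Nat.cast_ofNat,
        ← tMatrix_eq_mul_tMatrix_two_mul_sub]
    · rw [sum_three_sub_two_cons_append_succ, hsum]

theorem IsHJExpansion.sum_three_sub_eq {d n a : ℕ} (hd : 1 ≤ d) (ha : 1 ≤ a) (han : a < n)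
    (hcop : Nat.Coprime a n) {b : List ℤ} (hb : IsHJExpansion (d * n ^ 2) (d * n * a - 1) b) :
    (b.map (3 - ·)).sum = (d : ℤ) - 2 := by
  obtain ⟨l, -, hl, hM, hsum⟩ := exists_tChain hd ha han hcop
  refine (hjEval_injOn hb.2.1 hl ?_) ▸ hsum
  simp only [hb.hjEval_eq, hjEval_eq_div hl, hM, tMatrix]
  have : 1 ≤ d * n * a := Nat.mul_pos (Nat.mul_pos hd (by omega)) ha
  simp [Nat.cast_sub this]

/-- `e + e' + 2 ≡ e' (e + 1)² mod r` once `e e' ≡ 1`. -/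
theorem dvd_add_add_two_of_dvd_sq {r e e' : ℕ} (hsq : r ∣ (e + 1) ^ 2)
    (he : e * e' ≡ 1 [MOD r]) : r ∣ e + e' + 2 := by
  rw [← ZMod.natCast_eq_zero_iff] at hsq ⊢
  have := (ZMod.natCast_eq_natCast_iff _ _ _).2 he
  push_cast at hsq this ⊢
  linear_combination (e' : ZMod r) * hsq - (e + 2 : ZMod r) * this

theorem length_add_sum_two_sub (b : List ℤ) :
    (b.length : ℚ) + (b.map (fun x => 2 - (x : ℚ))).sum = ((b.map (3 - ·)).sum : ℤ) := by
  rw [bind_pure_comp, List.map_eq_map]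
  induction b with
  | nil => simp
  | cons x t ih =>
    simp only [List.length_cons, List.map_cons, List.sum_cons]
    push_cast at ih ⊢
    linarith

theorem length_add_two_add_sum_sub_div_eq {b : List ℤ} {r e e' m : ℕ} (hr : r ≠ 0)
    (h : e + e' + 2 = m * r) :
    (b.length : ℚ) + 2 + (b.map (fun x => 2 - (x : ℚ))).sum - ((e : ℚ) + e' + 2) / r
      = ((b.map (3 - ·)).sum : ℤ) + 2 - m := by
  have h' : (e : ℚ) + e' + 2 = m * r := by exact_mod_cast h
  rw [← length_add_sum_two_sub, div_eq_of_eq_mul (by exact_mod_cast hr) h']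
  ring

theorem add_one_le_mul_sq_of_lt {d n a : ℕ} (hd : 1 ≤ d) (han : a < n) :
    d * n * a + 1 ≤ d * n ^ 2 := by
  nlinarith [Nat.mul_le_mul_left (d * n) han, Nat.mul_pos hd (by omega : 0 < n)]

theorem beta_classT_general (d n a : ℕ) (hd : 1 ≤ d) (hn : 1 ≤ n) (ha : 1 ≤ a) (han : a ≤ n)
    (hcop : Nat.Coprime a n) (h2 : 2 ≤ d * n * a)
    (e' : ℕ) (he'r : e' < d * n ^ 2)
    (he' : (d * n * a - 1) * e' ≡ 1 [MOD d * n ^ 2])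
    (b : List ℤ) (hb : IsHJExpansion (d * n ^ 2) (d * n * a - 1) b) :
    (b.length : ℚ) + 2 + (b.map (fun x => 2 - (x : ℚ))).sum
      - (((d * n * a - 1 : ℕ) : ℚ) + e' + 2) / (d * n ^ 2) = (d : ℚ) - 1 := by
  have hdvd : d * n ^ 2 ∣ d * n * a - 1 + e' + 2 :=
    dvd_add_add_two_of_dvd_sq ⟨d * a ^ 2, by rw [Nat.sub_add_cancel (by omega)]; ring⟩ he'
  have hr : d * n ^ 2 ≠ 0 := by positivity
  rw [← Nat.cast_pow, ← Nat.cast_mul]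
  obtain rfl | hn2 := hn.eq_or_lt
  · obtain rfl : a = 1 := by omega
    simp only [one_pow, mul_one] at *
    obtain ⟨m, hm⟩ := hdvd
    obtain rfl : m = 2 := by
      have : 1 < m := Nat.lt_of_mul_lt_mul_left (a := d) (by omega)
      have : m < 3 := Nat.lt_of_mul_lt_mul_left (a := d) (by omega)
      omega
    rw [length_add_two_add_sum_sub_div_eq hr (hm.trans (mul_comm _ _)),
      hb.eq_replicate_two (by omega)]
    simp [Nat.cast_sub (by omega : 1 ≤ d)]
  · have han' : a < n := han.lt_of_ne (by rintro rfl; rw [Nat.coprime_self] at hcop; omega)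
    have hlt : d * n * a - 1 + e' + 2 < 2 * (d * n ^ 2) := by
      have := add_one_le_mul_sq_of_lt hd han'
      omega
    rw [length_add_two_add_sum_sub_div_eq hr
        ((Nat.eq_of_dvd_of_lt_two_mul (by omega) hdvd hlt).trans (one_mul _).symm),
      hb.sum_three_sub_eq hd ha han' hcop]
    push_cast
    ring

theorem beta_classT (d n a : ℕ) (hd : 1 ≤ d) (hn : 1 ≤ n) (ha : 1 ≤ a) (han : a ≤ n)
    (hcop : Nat.Coprime a n) (h2 : 2 ≤ d * n * a)
    (e' : ℕ) (he'1 : 1 ≤ e') (he'r : e' < d * n ^ 2)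
    (he' : (d * n * a - 1) * e' ≡ 1 [MOD d * n ^ 2])
    (b : List ℤ) (hb : IsHJExpansion (d * n ^ 2) (d * n * a - 1) b) :
    (b.length : ℚ) + 2 + (b.map (fun x => 2 - (x : ℚ))).sum
      - (((d * n * a - 1 : ℕ) : ℚ) + e' + 2) / (d * n ^ 2) = (d : ℚ) - 1 :=
  beta_classT_general d n a hd hn ha han hcop h2 e' he'r he' b hb
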